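/- Let μ be a Borel probability measure on ℝ^{m+1}₊ with finite first moment whose expectation m(μ) has all coordinates strictly positive, and let X₁, X₂, … be i.i.d. random variables with distribution μ. Then with probability 1 the generalized Gini index G(Z(μ̂_N)) of the empirical measure μ̂_N = (1/N) Σ_{i=1}^N δ_{X_i} is well defined for all sufficiently large N and converges to G(Z(μ)) as N → ∞. -/

import Mathlib

open MeasureTheory Pointwise Filter Topology ProbabilityTheory

/-- The zonoid of a Borel measure. -/
noncomputable def zonoid {n : ℕ} (μ : Measure (EuclideanSpace ℝ (Fin n))) :
    Set (EuclideanSpace ℝ (Fin n)) :=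
  {z | ∃ φ : EuclideanSpace ℝ (Fin n) → ℝ, Measurable φ ∧
    (∀ x, φ x ∈ Set.Icc (0 : ℝ) 1) ∧ z = ∫ x, φ x • x ∂μ}

/-- The non-negative octant. -/
def octant (n : ℕ) : Set (EuclideanSpace ℝ (Fin n)) := {x | ∀ i, 0 ≤ x i}

/-- The box (parallelotope) with opposite vertices `0` and `v`. -/
def parbox {n : ℕ} (v : EuclideanSpace ℝ (Fin n)) : Set (EuclideanSpace ℝ (Fin n)) :=
  {z | ∀ j, 0 ≤ z j ∧ z j ≤ v j}

/-- The empirical measure of the first `N` samples. -/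
noncomputable def empiricalMeasure {n : ℕ} (x : ℕ → EuclideanSpace ℝ (Fin n)) (N : ℕ) :
    Measure (EuclideanSpace ℝ (Fin n)) :=
  ((N : ENNReal))⁻¹ • ∑ i ∈ Finset.range N, Measure.dirac (x i)

/-- The generalized Gini index of a measure. -/
noncomputable def gini {n : ℕ} (μ : Measure (EuclideanSpace ℝ (Fin n))) : ℝ :=
  (MeasureTheory.volume (zonoid μ)).toReal /
    (MeasureTheory.volume (parbox (∫ x, x ∂μ))).toReal

/-!
The zonoid `Z(ν)` is a convex body with support function `h_ν(u) = ∫ max ⟪u, x⟫ 0 dν(x)`,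
Lipschitz with constant `∫ ‖x‖ dν`. The strong law of large numbers, applied to `x`, to `‖x‖`
and to `max ⟪u, x⟫ 0` for `u` in a countable dense set, shows that almost surely the empirical
means, first absolute moments and support functions converge; by equi-Lipschitz continuity the
support functions then converge uniformly on the unit sphere. Once `|h_N - h| ≤ ε` on unit
vectors, separation traps `Z(μ̂_N)` inside the `ε`-thickening of `closure Z(μ)` and, if `Z(μ)`
contains a ball of radius `c`, traps the image of `closure Z(μ)` under a homothety of ratio
`1 - ε / c` inside `closure Z(μ̂_N)`. These bounds squeeze the volumes, boundaries of convex
sets being Lebesgue-null. The volumes of the boxes converge as well, to a positive limit.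
-/

open Metric
open scoped RealInnerProductSpace NNReal

theorem Convex.mem_of_forall_exists_inner_le {E : Type*} [NormedAddCommGroup E]
    [InnerProductSpace ℝ E] [CompleteSpace E] {C : Set E} (hC : Convex ℝ C) (hCc : IsClosed C)
    (hne : C.Nonempty) {z : E} (h : ∀ u, ‖u‖ = 1 → ∃ y ∈ C, ⟪u, z⟫ ≤ ⟪u, y⟫) : z ∈ C := by
  by_contra hz
  obtain ⟨g, s, hgC, hgz⟩ := geometric_hahn_banach_closed_point hC hCc hz
  set v := (InnerProductSpace.toDual ℝ E).symm g
  have hv : ∀ w, ⟪v, w⟫ = g w := fun w => InnerProductSpace.toDual_symm_apply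
  obtain ⟨y₀, hy₀⟩ := hne
  have hv0 : v ≠ 0 := by
    rintro hv0
    have := hgC y₀ hy₀
    simp only [← hv, hv0, inner_zero_left] at this hgz
    linarith
  obtain ⟨y, hy, hzy⟩ := h (‖v‖⁻¹ • v) (norm_smul_inv_norm hv0)
  rw [real_inner_smul_left, real_inner_smul_left, hv, hv] at hzy
  have := le_of_mul_le_mul_left hzy (inv_pos.2 (norm_pos_iff.2 hv0))
  linarith [hgC y hy]

theorem tendstoUniformlyOn_of_dense_of_lipschitzWith {α β ι : Type*} [PseudoMetricSpace α]
    [PseudoMetricSpace β] {l : Filter ι} {F : ι → α → β} {f : α → β} {K s : Set α}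
    (hK : IsCompact K) (hs : Dense s) {L : ℝ≥0} (hF : ∀ᶠ i in l, LipschitzWith L (F i))
    (hf : LipschitzWith L f) (hFf : ∀ x ∈ s, Tendsto (fun i => F i x) l (𝓝 (f x))) :
    TendstoUniformlyOn F f l K := by
  rw [Metric.tendstoUniformlyOn_iff]
  intro ε hε
  set δ : ℝ := ε / (3 * (L + 1)) with hδ
  have hδ0 : 0 < δ := by positivity
  have hLδ : L * δ < ε / 3 := by
    rw [hδ, mul_div_assoc', div_lt_div_iff₀ (by positivity) (by norm_num)]
    nlinarith
  obtain ⟨t, hts, htf, hKt⟩ := hK.elim_finite_subcover_image (b := s) (c := fun y => ball y δ)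
    (fun _ _ => isOpen_ball) fun x _ => by
      obtain ⟨y, hy, hxy⟩ := hs.exists_dist_lt x hδ0
      exact Set.mem_biUnion hy (mem_ball.2 hxy)
  have hnet : ∀ᶠ i in l, ∀ y ∈ t, dist (f y) (F i y) < ε / 3 :=
    (eventually_all_finite htf).2 fun y hy =>
      (Metric.tendsto_nhds.1 (hFf y (hts hy)) (ε / 3) (by positivity)).mono fun i hi => by
        rwa [dist_comm]
  filter_upwards [hF, hnet] with i hFi hi x hx
  obtain ⟨y, hyt, hxy⟩ := Set.mem_iUnion₂.1 (hKt hx)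
  have hxy' : dist x y < δ := hxy
  calc dist (f x) (F i x) ≤ dist (f x) (f y) + dist (f y) (F i y) + dist (F i y) (F i x) :=
        dist_triangle4 _ _ _ _
    _ ≤ L * δ + dist (f y) (F i y) + L * δ := by
        gcongr
        · exact (hf.dist_le_mul x y).trans (by gcongr)
        · exact (hFi.dist_le_mul y x).trans (by rw [dist_comm]; gcongr)
    _ < ε := by linarith [hi y hyt]

section Zonoid

variable {n : ℕ} {ν ν' : Measure (EuclideanSpace ℝ (Fin n))}

noncomputable def zonoidSupport (ν : Measure (EuclideanSpace ℝ (Fin n)))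
    (u : EuclideanSpace ℝ (Fin n)) : ℝ :=
  ∫ x, max ⟪u, x⟫ 0 ∂ν

theorem zero_mem_zonoid (ν : Measure (EuclideanSpace ℝ (Fin n))) : 0 ∈ zonoid ν :=
  ⟨fun _ => 0, measurable_const, fun _ => ⟨le_rfl, zero_le_one⟩, by simp⟩

theorem integrable_smul_of_mem_Icc (hν : Integrable (fun x => x) ν)
    {φ : EuclideanSpace ℝ (Fin n) → ℝ} (hφm : Measurable φ)
    (hφ : ∀ x, φ x ∈ Set.Icc (0 : ℝ) 1) : Integrable (fun x => φ x • x) ν :=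
  hν.bdd_smul 1 hφm.aestronglyMeasurable <| .of_forall fun x => by
    rw [Real.norm_of_nonneg (hφ x).1]; exact (hφ x).2

theorem convex_zonoid (hν : Integrable (fun x => x) ν) : Convex ℝ (zonoid ν) := by
  rintro _ ⟨φ, hφm, hφ, rfl⟩ _ ⟨ψ, hψm, hψ, rfl⟩ a b ha hb hab
  refine ⟨fun x => a * φ x + b * ψ x, (hφm.const_mul a).add (hψm.const_mul b),
    fun x => ?_, ?_⟩
  · obtain ⟨h₁, h₂⟩ := hφ x
    obtain ⟨h₃, h₄⟩ := hψ x
    constructor <;> dsimp only <;> nlinarith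
  · have h₁ : Integrable (fun x => a • φ x • x) ν :=
      (integrable_smul_of_mem_Icc hν hφm hφ).smul a
    have h₂ : Integrable (fun x => b • ψ x • x) ν :=
      (integrable_smul_of_mem_Icc hν hψm hψ).smul b
    simp_rw [add_smul, mul_smul]
    rw [integral_add h₁ h₂, integral_smul, integral_smul]

theorem norm_le_integral_norm_of_mem_zonoid (hν : Integrable (fun x => x) ν)
    {z : EuclideanSpace ℝ (Fin n)} (hz : z ∈ zonoid ν) : ‖z‖ ≤ ∫ x, ‖x‖ ∂ν := by
  obtain ⟨φ, -, hφ, rfl⟩ := hz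
  refine (norm_integral_le_integral_norm _).trans (integral_mono_of_nonneg
    (.of_forall fun _ => norm_nonneg _) hν.norm (.of_forall fun x => ?_))
  dsimp only
  rw [norm_smul, Real.norm_of_nonneg (hφ x).1]
  exact mul_le_of_le_one_left (norm_nonneg _) (hφ x).2

theorem isBounded_zonoid (hν : Integrable (fun x => x) ν) : Bornology.IsBounded (zonoid ν) :=
  isBounded_iff_forall_norm_le.2 ⟨_, fun _ => norm_le_integral_norm_of_mem_zonoid hν⟩

theorem isCompact_closure_zonoid (hν : Integrable (fun x => x) ν) :
    IsCompact (closure (zonoid ν)) :=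
  (isBounded_zonoid hν).isCompact_closure

theorem volume_closure_zonoid (hν : Integrable (fun x => x) ν) :
    volume (closure (zonoid ν)) = volume (zonoid ν) :=
  measure_closure_of_null_frontier ((convex_zonoid hν).addHaar_frontier volume)

theorem integrable_max_inner_zero (hν : Integrable (fun x => x) ν)
    (u : EuclideanSpace ℝ (Fin n)) : Integrable (fun x => max ⟪u, x⟫ 0) ν :=
  (hν.const_inner u).pos_part

theorem inner_le_zonoidSupport (hν : Integrable (fun x => x) ν)
    {z : EuclideanSpace ℝ (Fin n)} (hz : z ∈ zonoid ν) (u : EuclideanSpace ℝ (Fin n)) :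
    ⟪u, z⟫ ≤ zonoidSupport ν u := by
  obtain ⟨φ, hφm, hφ, rfl⟩ := hz
  have hint := integrable_smul_of_mem_Icc hν hφm hφ
  rw [← integral_inner hint]
  refine integral_mono (hint.const_inner u) (integrable_max_inner_zero hν u) fun x => ?_
  rw [real_inner_smul_right]
  rcases le_total ⟪u, x⟫ 0 with h | h
  · exact (mul_nonpos_of_nonneg_of_nonpos (hφ x).1 h).trans (le_max_right _ _)
  · exact (mul_le_of_le_one_left h (hφ x).2).trans (le_max_left _ _)

theorem inner_le_zonoidSupport_of_mem_closure (hν : Integrable (fun x => x) ν)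
    {z : EuclideanSpace ℝ (Fin n)} (hz : z ∈ closure (zonoid ν))
    (u : EuclideanSpace ℝ (Fin n)) : ⟪u, z⟫ ≤ zonoidSupport ν u :=
  closure_minimal (t := {y | ⟪u, y⟫ ≤ zonoidSupport ν u})
    (fun _ hy => inner_le_zonoidSupport hν hy u)
    (isClosed_le (continuous_const.inner continuous_id) continuous_const) hz

theorem exists_mem_zonoid_inner_eq (hν : Integrable (fun x => x) ν)
    (u : EuclideanSpace ℝ (Fin n)) : ∃ z ∈ zonoid ν, ⟪u, z⟫ = zonoidSupport ν u := by
  set H := {x : EuclideanSpace ℝ (Fin n) | 0 < ⟪u, x⟫}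
  have hH : MeasurableSet H :=
    measurableSet_lt measurable_const (continuous_const.inner continuous_id).measurable
  have hφ : ∀ x, H.indicator 1 x ∈ Set.Icc (0 : ℝ) 1 := fun x => by
    by_cases hx : x ∈ H <;> simp [hx]
  have hint := integrable_smul_of_mem_Icc hν (measurable_one.indicator hH) hφ
  refine ⟨_, ⟨_, measurable_one.indicator hH, hφ, rfl⟩, ?_⟩
  rw [← integral_inner hint]
  refine integral_congr_ae (.of_forall fun x => ?_)
  by_cases hx : 0 < ⟪u, x⟫
  · simp [H, hx, hx.le]
  · simp [H, hx, not_lt.1 hx]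

theorem lipschitzWith_zonoidSupport (hν : Integrable (fun x => x) ν) :
    LipschitzWith (∫ x, ‖x‖ ∂ν).toNNReal (zonoidSupport ν) := by
  refine LipschitzWith.of_dist_le_mul fun u v => ?_
  rw [Real.dist_eq, zonoidSupport, zonoidSupport,
    ← integral_sub (integrable_max_inner_zero hν u) (integrable_max_inner_zero hν v),
    Real.coe_toNNReal _ (integral_nonneg fun _ => norm_nonneg _), dist_eq_norm, mul_comm,
    ← integral_const_mul]
  refine (abs_integral_le_integral_abs).trans (integral_mono_of_nonneg
    (.of_forall fun _ => abs_nonneg _) (hν.norm.const_mul _) (.of_forall fun x => ?_))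
  calc |max ⟪u, x⟫ 0 - max ⟪v, x⟫ 0| ≤ |⟪u, x⟫ - ⟪v, x⟫| := abs_max_sub_max_le_abs _ _ _
    _ = |⟪u - v, x⟫| := by rw [inner_sub_left]
    _ ≤ ‖u - v‖ * ‖x‖ := abs_real_inner_le_norm _ _

theorem zonoid_subset_cthickening (hν : Integrable (fun x => x) ν)
    (hν' : Integrable (fun x => x) ν') {ε : ℝ} (hε : 0 ≤ ε)
    (h : ∀ u, ‖u‖ = 1 → zonoidSupport ν' u ≤ zonoidSupport ν u + ε) :
    zonoid ν' ⊆ cthickening ε (closure (zonoid ν)) := by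
  intro z hz
  refine ((convex_zonoid hν).closure.cthickening ε).mem_of_forall_exists_inner_le
    isClosed_cthickening ⟨0, self_subset_cthickening _ (subset_closure (zero_mem_zonoid ν))⟩
    fun u hu => ?_
  obtain ⟨y, hy, hyu⟩ := exists_mem_zonoid_inner_eq hν u
  refine ⟨y + ε • u, mem_cthickening_of_dist_le _ y _ _ (subset_closure hy) ?_, ?_⟩
  · rw [dist_eq_norm, add_sub_cancel_left, norm_smul, hu, mul_one, Real.norm_of_nonneg hε]
  · rw [inner_add_right, real_inner_smul_right, real_inner_self_eq_norm_sq, hu, hyu]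
    linarith [inner_le_zonoidSupport hν' hz u, h u hu]

theorem homothety_image_subset_closure_zonoid (hν : Integrable (fun x => x) ν)
    (hν' : Integrable (fun x => x) ν') {x₀ : EuclideanSpace ℝ (Fin n)} {c δ : ℝ} (hc : 0 ≤ c)
    (hball : closedBall x₀ c ⊆ closure (zonoid ν)) (hδ : δ ∈ Set.Icc 0 1)
    (h : ∀ u, ‖u‖ = 1 → zonoidSupport ν u ≤ zonoidSupport ν' u + δ * c) :
    AffineMap.homothety x₀ (1 - δ) '' closure (zonoid ν) ⊆ closure (zonoid ν') := by
  rintro _ ⟨y, hy, rfl⟩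
  refine (convex_zonoid hν').closure.mem_of_forall_exists_inner_le isClosed_closure
    ⟨0, subset_closure (zero_mem_zonoid ν')⟩ fun u hu => ?_
  obtain ⟨z, hz, hzu⟩ := exists_mem_zonoid_inner_eq hν' u
  refine ⟨z, subset_closure hz, ?_⟩
  have hx₀ : ⟪u, x₀⟫ + c ≤ zonoidSupport ν u := by
    have hmem : x₀ + c • u ∈ closedBall x₀ c := by
      rw [mem_closedBall, dist_eq_norm, add_sub_cancel_left, norm_smul, hu, mul_one,
        Real.norm_of_nonneg hc]
    have := inner_le_zonoidSupport_of_mem_closure hν (hball hmem) u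
    rwa [inner_add_right, real_inner_smul_right, real_inner_self_eq_norm_sq, hu, one_pow,
      mul_one] at this
  have hy' := mul_le_mul_of_nonneg_left (inner_le_zonoidSupport_of_mem_closure hν hy u)
    (sub_nonneg.2 hδ.2)
  rw [AffineMap.homothety_apply, vsub_eq_sub, vadd_eq_add, inner_add_right,
    real_inner_smul_right, inner_sub_right, hzu]
  nlinarith [h u hu, mul_le_mul_of_nonneg_left hx₀ hδ.1]

end Zonoid

section Limits

variable {n : ℕ} {ι : Type*} {l : Filter ι} {ν : ι → Measure (EuclideanSpace ℝ (Fin n))}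
  {ν₀ : Measure (EuclideanSpace ℝ (Fin n))}

theorem tendstoUniformlyOn_zonoidSupport (hν : ∀ i, Integrable (fun x => x) (ν i))
    (hν₀ : Integrable (fun x => x) ν₀)
    (hnorm : Tendsto (fun i => ∫ x, ‖x‖ ∂ν i) l (𝓝 (∫ x, ‖x‖ ∂ν₀)))
    {s : Set (EuclideanSpace ℝ (Fin n))} (hs : Dense s)
    (hconv : ∀ u ∈ s, Tendsto (fun i => zonoidSupport (ν i) u) l (𝓝 (zonoidSupport ν₀ u)))
    {K : Set (EuclideanSpace ℝ (Fin n))} (hK : IsCompact K) :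
    TendstoUniformlyOn (fun i => zonoidSupport (ν i)) (zonoidSupport ν₀) l K := by
  refine tendstoUniformlyOn_of_dense_of_lipschitzWith hK hs
    (L := (∫ x, ‖x‖ ∂ν₀ + 1).toNNReal) ?_ ((lipschitzWith_zonoidSupport hν₀).weaken ?_) hconv
  · filter_upwards [(tendsto_order.1 hnorm).2 _ (lt_add_one _)] with i hi
    exact (lipschitzWith_zonoidSupport (hν i)).weaken (Real.toNNReal_le_toNNReal hi.le)
  · exact Real.toNNReal_le_toNNReal (le_add_of_nonneg_right zero_le_one)

theorem eventually_abs_zonoidSupport_sub_lt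
    (h : TendstoUniformlyOn (fun i => zonoidSupport (ν i)) (zonoidSupport ν₀) l (sphere 0 1))
    {ε : ℝ} (hε : 0 < ε) :
    ∀ᶠ i in l, ∀ u, ‖u‖ = 1 → |zonoidSupport (ν i) u - zonoidSupport ν₀ u| < ε :=
  (Metric.tendstoUniformlyOn_iff.1 h ε hε).mono fun _ hi u hu => by
    rw [abs_sub_comm, ← Real.dist_eq]
    exact hi u (mem_sphere_zero_iff_norm.2 hu)

theorem eventually_volume_zonoid_lt (hν : ∀ i, Integrable (fun x => x) (ν i))
    (hν₀ : Integrable (fun x => x) ν₀)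
    (h : TendstoUniformlyOn (fun i => zonoidSupport (ν i)) (zonoidSupport ν₀) l (sphere 0 1))
    {r : ENNReal} (hr : volume (zonoid ν₀) < r) :
    ∀ᶠ i in l, volume (zonoid (ν i)) < r := by
  rw [← volume_closure_zonoid hν₀] at hr
  obtain ⟨ε, hεr, hε⟩ := (((tendsto_measure_cthickening_of_isCompact
    (isCompact_closure_zonoid hν₀)).eventually (gt_mem_nhds hr)).filter_mono
      nhdsWithin_le_nhds |>.and self_mem_nhdsWithin).exists (f := 𝓝[>] (0 : ℝ))
  filter_upwards [eventually_abs_zonoidSupport_sub_lt h hε] with i hi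
  refine (measure_mono (zonoid_subset_cthickening hν₀ (hν i) hε.le
    fun u hu => ?_)).trans_lt hεr
  linarith [abs_sub_lt_iff.1 (hi u hu)]

theorem eventually_lt_volume_zonoid (hν : ∀ i, Integrable (fun x => x) (ν i))
    (hν₀ : Integrable (fun x => x) ν₀)
    (h : TendstoUniformlyOn (fun i => zonoidSupport (ν i)) (zonoidSupport ν₀) l (sphere 0 1))
    {r : ENNReal} (hr : r < volume (zonoid ν₀)) :
    ∀ᶠ i in l, r < volume (zonoid (ν i)) := by
  set K := closure (zonoid ν₀)
  have hKvol : volume K = volume (zonoid ν₀) := volume_closure_zonoid hν₀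
  obtain ⟨x₀, hx₀⟩ : (interior K).Nonempty := by
    refine nonempty_of_measure_ne_zero (μ := volume) ?_
    rw [measure_interior_of_null_frontier ((convex_zonoid hν₀).closure.addHaar_frontier _),
      hKvol]
    exact (zero_le.trans_lt hr).ne'
  obtain ⟨c, hc, hball⟩ := nhds_basis_closedBall.mem_iff.1 (mem_interior_iff_mem_nhds.1 hx₀)
  have hshrink : Tendsto (fun δ : ℝ => ENNReal.ofReal |(1 - δ) ^ n| * volume K) (𝓝 0)
      (𝓝 (volume (zonoid ν₀))) := by
    rw [← hKvol]
    convert ENNReal.Tendsto.mul_const ((ENNReal.continuous_ofReal.comp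
      (by fun_prop : Continuous fun δ : ℝ => |(1 - δ) ^ n|)).tendsto 0)
      (Or.inr ((isCompact_closure_zonoid hν₀).measure_lt_top (μ := volume)).ne) using 2 <;>
    simp [K]
  obtain ⟨δ, hδr, hδ⟩ := ((hshrink.eventually (lt_mem_nhds hr)).filter_mono nhdsWithin_le_nhds
    |>.and (Ioo_mem_nhdsGT one_pos)).exists (f := 𝓝[>] (0 : ℝ))
  filter_upwards [eventually_abs_zonoidSupport_sub_lt h (mul_pos hδ.1 hc)] with i hi
  have hsub : AffineMap.homothety x₀ (1 - δ) '' K ⊆ closure (zonoid (ν i)) :=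
    homothety_image_subset_closure_zonoid hν₀ (hν i) hc.le hball ⟨hδ.1.le, hδ.2.le⟩
      fun u hu => by linarith [abs_sub_lt_iff.1 (hi u hu)]
  calc r < ENNReal.ofReal |(1 - δ) ^ n| * volume K := hδr
    _ = volume (AffineMap.homothety x₀ (1 - δ) '' K) := by
        rw [Measure.addHaar_image_homothety, finrank_euclideanSpace_fin]
    _ ≤ volume (closure (zonoid (ν i))) := measure_mono hsub
    _ = volume (zonoid (ν i)) := volume_closure_zonoid (hν i)

theorem tendsto_volume_zonoid (hν : ∀ i, Integrable (fun x => x) (ν i))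
    (hν₀ : Integrable (fun x => x) ν₀)
    (h : TendstoUniformlyOn (fun i => zonoidSupport (ν i)) (zonoidSupport ν₀) l (sphere 0 1)) :
    Tendsto (fun i => (volume (zonoid (ν i))).toReal) l (𝓝 (volume (zonoid ν₀)).toReal) :=
  (ENNReal.tendsto_toReal ((isBounded_zonoid hν₀).measure_lt_top.ne)).comp <|
    tendsto_order.2 ⟨fun _ hr => eventually_lt_volume_zonoid hν hν₀ h hr,
      fun _ hr => eventually_volume_zonoid_lt hν hν₀ h hr⟩

theorem volume_parbox_toReal (v : EuclideanSpace ℝ (Fin n)) :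
    (volume (parbox v)).toReal = ∏ j, max (v j) 0 := by
  have hbox : parbox v = (MeasurableEquiv.toLp 2 (Fin n → ℝ)).symm ⁻¹'
      Set.univ.pi fun j => Set.Icc 0 (v j) := by
    ext x
    simp only [parbox, Set.mem_preimage, Set.mem_univ_pi, Set.mem_Icc, Set.mem_ofPred_eq]
    rfl
  rw [hbox, (EuclideanSpace.volume_preserving_symm_measurableEquiv_toLp (Fin n)).measure_preimage
    (MeasurableSet.univ_pi fun _ => measurableSet_Icc).nullMeasurableSet, volume_pi_pi,
    ENNReal.toReal_prod]
  simp [Real.volume_Icc, ENNReal.toReal_ofReal']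

theorem continuous_volume_parbox_toReal :
    Continuous fun v : EuclideanSpace ℝ (Fin n) => (volume (parbox v)).toReal := by
  simp_rw [volume_parbox_toReal]
  fun_prop

theorem tendsto_gini (hν : ∀ i, Integrable (fun x => x) (ν i))
    (hν₀ : Integrable (fun x => x) ν₀)
    (hmean : Tendsto (fun i => ∫ x, x ∂ν i) l (𝓝 (∫ x, x ∂ν₀)))
    (hpos : ∀ j, 0 < (∫ x, x ∂ν₀) j)
    (hsupp : TendstoUniformlyOn (fun i => zonoidSupport (ν i)) (zonoidSupport ν₀) l
      (sphere 0 1)) :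
    (∀ᶠ i in l, volume (parbox (∫ x, x ∂ν i)) ≠ 0) ∧
      Tendsto (fun i => gini (ν i)) l (𝓝 (gini ν₀)) := by
  have hbox := (continuous_volume_parbox_toReal.tendsto _).comp hmean
  have hbox₀ : (volume (parbox (∫ x, x ∂ν₀))).toReal ≠ 0 := by
    rw [volume_parbox_toReal]
    exact (Finset.prod_pos fun j _ => lt_max_of_lt_left (hpos j)).ne'
  exact ⟨(hbox.eventually_ne hbox₀).mono fun i hi h0 => hi (by simp [h0]),
    (tendsto_volume_zonoid hν hν₀ hsupp).div hbox hbox₀⟩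

end Limits

section Empirical

variable {n : ℕ} {F : Type*} [NormedAddCommGroup F]

theorem integrable_empiricalMeasure (xs : ℕ → EuclideanSpace ℝ (Fin n)) (N : ℕ)
    (f : EuclideanSpace ℝ (Fin n) → F) : Integrable f (empiricalMeasure xs N) := by
  rcases eq_or_ne N 0 with rfl | hN
  · simp [empiricalMeasure]
  · exact (integrable_finsetSum_measure.2 fun i _ => integrable_dirac enorm_lt_top).smul_measure
      (by simpa using hN)

variable [NormedSpace ℝ F] [CompleteSpace F]

theorem integral_empiricalMeasure (xs : ℕ → EuclideanSpace ℝ (Fin n)) (N : ℕ)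
    (f : EuclideanSpace ℝ (Fin n) → F) :
    ∫ x, f x ∂empiricalMeasure xs N = (N : ℝ)⁻¹ • ∑ i ∈ Finset.range N, f (xs i) := by
  rw [empiricalMeasure, integral_smul_measure,
    integral_finsetSum_measure fun i _ => integrable_dirac enorm_lt_top]
  simp

theorem ae_tendsto_integral_empiricalMeasure [MeasurableSpace F] [BorelSpace F]
    {Ω : Type*} [MeasureSpace Ω] [IsProbabilityMeasure (ℙ : Measure Ω)]
    {X : ℕ → Ω → EuclideanSpace ℝ (Fin n)} (hXm : ∀ i, Measurable (X i))
    (hindep : iIndepFun X ℙ) {μ : Measure (EuclideanSpace ℝ (Fin n))}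
    (hdist : ∀ i, Measure.map (X i) ℙ = μ) {g : EuclideanSpace ℝ (Fin n) → F}
    (hg : Measurable g) (hgμ : Integrable g μ) :
    ∀ᵐ ω ∂(ℙ : Measure Ω), Tendsto (fun N => ∫ x, g x ∂empiricalMeasure (fun i => X i ω) N)
      atTop (𝓝 (∫ x, g x ∂μ)) := by
  have hident : ∀ i, IdentDistrib (g ∘ X i) (g ∘ X 0) ℙ ℙ := fun i =>
    (IdentDistrib.mk (hXm i).aemeasurable (hXm 0).aemeasurable (by rw [hdist, hdist])).comp hg
  have hint : Integrable (g ∘ X 0) ℙ :=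
    (integrable_map_measure (by rw [hdist]; exact hgμ.1) (hXm 0).aemeasurable).1
      (by rwa [hdist])
  have hmean : ∫ ω, (g ∘ X 0) ω = ∫ x, g x ∂μ := by
    rw [← hdist 0, integral_map (hXm 0).aemeasurable (by rw [hdist 0]; exact hgμ.1)]
    rfl
  filter_upwards [strong_law_ae (fun i => g ∘ X i) hint
    (fun i j hij => (hindep.indepFun hij).comp hg hg) hident] with ω hω
  simp_rw [integral_empiricalMeasure]
  rwa [← hmean]

end Empirical

theorem gini_glivenko_cantelli_general {m : ℕ}
    {Ω : Type*} [MeasureSpace Ω] [IsProbabilityMeasure (ℙ : Measure Ω)]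
    (X : ℕ → Ω → EuclideanSpace ℝ (Fin (m + 1))) (hXm : ∀ i, Measurable (X i))
    (hindep : iIndepFun X ℙ)
    (μ : Measure (EuclideanSpace ℝ (Fin (m + 1))))
    (hdist : ∀ i, Measure.map (X i) ℙ = μ)
    (hμint : Integrable (fun x => x) μ)
    (hpos : ∀ j, 0 < (∫ x, x ∂μ) j) :
    ∀ᵐ ω ∂(ℙ : Measure Ω),
      (∃ N₀, ∀ N ≥ N₀,
        volume (parbox (∫ x, x ∂(empiricalMeasure (fun i => X i ω) N))) ≠ 0) ∧
      Tendsto (fun N => gini (empiricalMeasure (fun i => X i ω) N)) atTop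
        (𝓝 (gini μ)) := by
  set u := TopologicalSpace.denseSeq (EuclideanSpace ℝ (Fin (m + 1)))
  have hmean := ae_tendsto_integral_empiricalMeasure hXm hindep hdist measurable_id' hμint
  have hnorm := ae_tendsto_integral_empiricalMeasure hXm hindep hdist measurable_norm hμint.norm
  have hsupp : ∀ᵐ ω ∂(ℙ : Measure Ω), ∀ k, Tendsto
      (fun N => zonoidSupport (empiricalMeasure (fun i => X i ω) N) (u k)) atTop
      (𝓝 (zonoidSupport μ (u k))) :=
    ae_all_iff.2 fun k => ae_tendsto_integral_empiricalMeasure hXm hindep hdist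
      (by fun_prop) (integrable_max_inner_zero hμint (u k))
  filter_upwards [hmean, hnorm, hsupp] with ω hmeanω hnormω hsuppω
  have hν N := integrable_empiricalMeasure (fun i => X i ω) N (fun x => x)
  obtain ⟨hbox, hgini⟩ := tendsto_gini hν hμint hmeanω hpos <|
    tendstoUniformlyOn_zonoidSupport hν hμint hnormω (TopologicalSpace.denseRange_denseSeq _)
      (Set.forall_mem_range.2 hsuppω) (isCompact_sphere 0 1)
  exact ⟨eventually_atTop.1 hbox, hgini⟩

theorem gini_glivenko_cantelli {m : ℕ}
    {Ω : Type*} [MeasureSpace Ω] [IsProbabilityMeasure (ℙ : Measure Ω)]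
    (X : ℕ → Ω → EuclideanSpace ℝ (Fin (m + 1))) (hXm : ∀ i, Measurable (X i))
    (hindep : iIndepFun X ℙ)
    (μ : Measure (EuclideanSpace ℝ (Fin (m + 1)))) [IsProbabilityMeasure μ]
    (hdist : ∀ i, Measure.map (X i) ℙ = μ)
    (hμint : Integrable (fun x => x) μ)
    (hsupp : μ (octant (m + 1))ᶜ = 0)
    (hpos : ∀ j, 0 < (∫ x, x ∂μ) j) :
    ∀ᵐ ω ∂(ℙ : Measure Ω),
      (∃ N₀, ∀ N ≥ N₀,
        volume (parbox (∫ x, x ∂(empiricalMeasure (fun i => X i ω) N))) ≠ 0) ∧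
      Tendsto (fun N => gini (empiricalMeasure (fun i => X i ω) N)) atTop
        (𝓝 (gini μ)) :=
  gini_glivenko_cantelli_general X hXm hindep μ hdist hμint hpos
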